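/- arXiv:0906.0240 — 2 statements merged into one kernel-verified Lean document; each statement's English description precedes it below -/
import Mathlib

section
/- Let A_n be the probability that in a uniformly random tournament on n vertices there is no directed path from a fixed vertex a to a fixed distinct vertex s. Then 2^(n-2) · A_n → 1 as n → ∞. -/
/-- A tournament on `Fin n`: an orientation of each edge `{i,j}`, `i < j`, of the complete
graph. `ω ⟨(i,j),h⟩ = true` means the edge is oriented `i → j`. Each of the `2^(n choose 2)`
orientations is equally likely under the uniform probability `Pr`. -/
abbrev Orient (n : ℕ) : Type := {p : Fin n × Fin n // p.1 < p.2} → Bool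

/-- The edge between `i` and `j` is oriented from `i` to `j`. -/
def dir {n : ℕ} (ω : Orient n) (i j : Fin n) : Prop :=
  (∃ h : i < j, ω ⟨(i, j), h⟩ = true) ∨ (∃ h : j < i, ω ⟨(j, i), h⟩ = false)

/-- There is a directed path from `a` to `s` in the tournament `ω`. -/
def reaches {n : ℕ} (ω : Orient n) (a s : Fin n) : Prop :=
  Relation.TransGen (dir ω) a s

/-- The probability of the event `E` for a uniformly random tournament on `n` vertices. -/
noncomputable def Pr (n : ℕ) (E : Orient n → Prop) : ℝ :=
  haveI := Classical.decPred E
  ((Finset.univ.filter E).card : ℝ) / (Fintype.card (Orient n) : ℝ)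

/-!
If there is no path from `a` to `s`, then the set `R` consisting of `a` and the vertices
reachable from it contains `a` but not `s`, and every edge between `R` and its complement
points into `R`. For a fixed `R` with `|R| = k`, this happens with probability
`2^{-k(n-k)}`. A union bound over `R` therefore gives `A_n ≤ ∑_k C(n-2, k-1) 2^{-k(n-k)}`.
Only `k = 1` (`a` is a sink) and `k = n - 1` (`s` is a source) contribute
`2^{-(n-1)}` each; all other terms together are `O(n² 2^{-2n})`. Conversely, `A_n` is at
least the probability that `a` is a sink or `s` is a source. These two events share only
the edge `as`, so by inclusion–exclusion this probability is
`2 · 2^{-(n-1)} - 2^{-(2n-3)}`.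
-/

open Finset

abbrev Edge (n : ℕ) : Type := {p : Fin n × Fin n // p.1 < p.2}

theorem card_filter_forall_mem_eq_mul_two_pow {α : Type*} [Fintype α] [DecidableEq α]
    (S : Finset α) (v : α → Bool) :
    #{ω : α → Bool | ∀ e ∈ S, ω e = v e} * 2 ^ #S = 2 ^ Fintype.card α := by
  have hpi : ({ω : α → Bool | ∀ e ∈ S, ω e = v e} : Finset _) =
      Fintype.piFinset fun e => if e ∈ S then {v e} else univ := by
    ext ω
    simp only [mem_filter, mem_univ, true_and, Fintype.mem_piFinset]
    refine ⟨fun h e => ?_, fun h e he => by simpa [he] using h e⟩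
    split_ifs with he <;> simp [h e, *]
  simp only [hpi, Fintype.card_piFinset, apply_ite card, card_singleton, card_univ,
    Fintype.card_bool, prod_ite, prod_const_one, one_mul, prod_const, ← pow_add]
  rw [filter_not, filter_mem_eq_inter, univ_inter, card_sdiff_of_subset (subset_univ S),
    card_univ, Nat.sub_add_cancel (card_le_univ S)]

variable {n : ℕ}

theorem Pr_eq_card_div (E : Orient n → Prop) [DecidablePred E] :
    Pr n E = #{ω | E ω} / Fintype.card (Orient n) := by
  unfold Pr
  congr

theorem Pr_mono {E F : Orient n → Prop} (h : ∀ ω, E ω → F ω) : Pr n E ≤ Pr n F := by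
  classical
  simp only [Pr_eq_card_div]
  gcongr
  exact h _

theorem Pr_or_add_Pr_and (E F : Orient n → Prop) :
    Pr n (fun ω => E ω ∨ F ω) + Pr n (fun ω => E ω ∧ F ω) = Pr n E + Pr n F := by
  classical
  simp only [Pr_eq_card_div, filter_or, filter_and, ← add_div]
  rw_mod_cast [card_union_add_card_inter]

theorem Pr_exists_le_sum {ι : Type*} (I : Finset ι) (E : ι → Orient n → Prop) :
    Pr n (fun ω => ∃ i ∈ I, E i ω) ≤ ∑ i ∈ I, Pr n (E i) := by
  classical
  simp only [Pr_eq_card_div, ← sum_div]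
  gcongr
  exact_mod_cast (card_le_card fun ω => by simp).trans
    (card_biUnion_le (s := I) (t := fun i => {ω | E i ω}))

theorem Pr_forall_mem_eq (S : Finset (Edge n)) (v : Edge n → Bool) :
    Pr n (fun ω => ∀ e ∈ S, ω e = v e) = (1 / 2) ^ #S := by
  classical
  have hcard : (#{ω : Orient n | ∀ e ∈ S, ω e = v e} : ℝ) =
      2 ^ Fintype.card (Edge n) / 2 ^ #S := by
    rw [eq_div_iff (by positivity)]
    exact_mod_cast card_filter_forall_mem_eq_mul_two_pow S v
  rw [Pr_eq_card_div, hcard, Fintype.card_fun, Fintype.card_bool]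
  push_cast
  rw [one_div_pow, div_div_cancel_left' (by positivity), one_div]

def cut (R : Finset (Fin n)) : Finset (Edge n) :=
  {e | Xor (e.1.1 ∈ R) (e.1.2 ∈ R)}

theorem card_cut (R : Finset (Fin n)) : #(cut R) = #R * (n - #R) := by
  have h : #(cut R) = #(R ×ˢ Rᶜ) := by
    refine card_bij (fun e _ => if e.1.1 ∈ R then e.1 else e.1.swap) ?_ ?_ ?_
    · intro e he
      simp only [cut, mem_filter, mem_univ, true_and] at he
      split_ifs <;> simp_all [xor_def]
    · intro e he e' he' h
      simp only [cut, mem_filter, mem_univ, true_and] at he he'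
      have := e.2
      have := e'.2
      apply Subtype.ext
      grind
    · rintro ⟨i, j⟩ hij
      simp only [mem_product, mem_compl] at hij
      rcases lt_or_gt_of_ne (show i ≠ j by rintro rfl; exact hij.2 hij.1) with h | h
      · exact ⟨⟨(i, j), h⟩, by simp [cut, xor_def, hij], by simp [hij]⟩
      · exact ⟨⟨(j, i), h⟩, by simp [cut, xor_def, hij], by simp [hij]⟩
  rw [h, card_product, card_compl, Fintype.card_fin]

theorem cut_compl (R : Finset (Fin n)) : cut Rᶜ = cut R := by
  ext e
  simp only [cut, mem_filter, mem_univ, true_and, mem_compl, xor_def]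
  tauto

theorem card_cut_singleton_inter_le_one {a s : Fin n} (has : a ≠ s) :
    #(cut {a} ∩ cut {s}) ≤ 1 := by
  refine card_le_one.2 ?_
  rintro ⟨⟨i, j⟩, hij⟩ he ⟨⟨i', j'⟩, hij'⟩ he'
  simp only [cut, mem_inter, mem_filter, mem_univ, true_and, mem_singleton, xor_def] at he he'
  simp only [Subtype.mk.injEq, Prod.mk.injEq]
  simp only [Fin.lt_def] at hij hij'
  simp only [Fin.ext_iff] at he he' has ⊢
  omega

def OutClosed (ω : Orient n) (R : Finset (Fin n)) : Prop :=
  ∀ i ∈ R, ∀ j, dir ω i j → j ∈ R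

-- `ω e = true` orients `e` from its smaller to its larger end, so the right-hand side says
-- that every edge of the cut points into `R`.
theorem outClosed_iff (ω : Orient n) (R : Finset (Fin n)) :
    OutClosed ω R ↔ ∀ e ∈ cut R, ω e = decide (e.1.1 ∉ R) := by
  constructor
  · rintro hR ⟨⟨i, j⟩, hij⟩ he
    simp only [cut, mem_filter, mem_univ, true_and, xor_def] at he
    rcases he with ⟨hi, hj⟩ | ⟨hj, hi⟩
    · simpa [hi] using fun h => hj (hR i hi j (.inl ⟨hij, h⟩))
    · simpa [hi] using fun h => hi (hR j hj i (.inr ⟨hij, h⟩))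
  · rintro h i hi j (⟨hij, hω⟩ | ⟨hji, hω⟩) <;> by_contra hj
    · simpa [hi, hω] using h ⟨(i, j), hij⟩ (by simp [cut, xor_def, hi, hj])
    · simpa [hj, hω] using h ⟨(j, i), hji⟩ (by simp [cut, xor_def, hi, hj])

theorem Pr_outClosed (R : Finset (Fin n)) :
    Pr n (OutClosed · R) = (1 / 2) ^ (#R * (n - #R)) := by
  simp only [outClosed_iff, Pr_forall_mem_eq, card_cut]

theorem Pr_outClosed_and_outClosed_le (R R' : Finset (Fin n)) :
    Pr n (fun ω => OutClosed ω R ∧ OutClosed ω R') ≤ (1 / 2) ^ #(cut R ∪ cut R') := by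
  classical
  rw [← Pr_forall_mem_eq _
    fun e => if e ∈ cut R then decide (e.1.1 ∉ R) else decide (e.1.1 ∉ R')]
  refine Pr_mono fun ω ⟨hR, hR'⟩ e he => ?_
  rw [outClosed_iff] at hR hR'
  split_ifs with h
  exacts [hR e h, hR' e ((mem_union.1 he).resolve_left h)]

theorem not_reaches_of_outClosed {ω : Orient n} {R : Finset (Fin n)} {a s : Fin n}
    (hR : OutClosed ω R) (ha : a ∈ R) (hs : s ∉ R) : ¬ reaches ω a s := by
  refine fun h => hs ?_
  clear hs
  induction h with
  | single h => exact hR a ha _ h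
  | tail _ h ih => exact hR _ ih _ h

theorem exists_outClosed_of_not_reaches {ω : Orient n} {a s : Fin n} (h : ¬ reaches ω a s) :
    ∃ T ∈ (univ \ {a, s}).powerset, OutClosed ω (insert a T) := by
  classical
  refine ⟨({x | x ≠ a ∧ reaches ω a x} : Finset (Fin n)), ?_, ?_⟩
  · refine mem_powerset.2 fun x hx => ?_
    simp only [mem_filter, mem_univ, true_and] at hx
    simp only [mem_sdiff, mem_univ, mem_insert, mem_singleton, true_and]
    rintro (rfl | rfl)
    exacts [hx.1 rfl, h hx.2]
  · intro i hi j hij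
    simp only [mem_insert, mem_filter, mem_univ, true_and] at hi ⊢
    by_cases hja : j = a
    · exact .inl hja
    · refine .inr ⟨hja, ?_⟩
      rcases hi with rfl | ⟨_, hi⟩
      exacts [.single hij, hi.tail hij]

theorem choose_le_mul_two_pow (j l : ℕ) :
    (j + l + 2).choose (j + 1) ≤ 8 * (j + l + 2) * 2 ^ (j * l) := by
  rcases Nat.eq_zero_or_pos j with rfl | hj
  · simp
  rcases Nat.eq_zero_or_pos l with rfl | hl
  · simp [Nat.choose_succ_self_right]
  calc (j + l + 2).choose (j + 1) ≤ 2 ^ (j + l + 2) := Nat.choose_le_two_pow _ _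
    _ ≤ 2 ^ (j * l + 3) := Nat.pow_le_pow_right two_pos (by nlinarith)
    _ ≤ 8 * (j + l + 2) * 2 ^ (j * l) := by
        rw [pow_add]
        nlinarith [Nat.one_le_two_pow (n := j * l)]

theorem choose_mul_half_pow_le (j l : ℕ) :
    ((j + l + 2).choose (j + 1) : ℝ) * (1 / 2) ^ ((j + 2) * (l + 2)) ≤
      8 * (j + l + 2) * (1 / 2) ^ (2 * (j + l + 2)) := by
  have hexp : (j + 2) * (l + 2) = j * l + 2 * (j + l + 2) := by ring
  have hchoose : ((j + l + 2).choose (j + 1) : ℝ) ≤ 8 * (j + l + 2) * 2 ^ (j * l) := by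
    exact_mod_cast choose_le_mul_two_pow j l
  calc ((j + l + 2).choose (j + 1) : ℝ) * (1 / 2) ^ ((j + 2) * (l + 2))
      ≤ 8 * (j + l + 2) * 2 ^ (j * l) * ((1 / 2) ^ (j * l) * (1 / 2) ^ (2 * (j + l + 2))) := by
        rw [hexp, pow_add]
        gcongr
    _ = 8 * (j + l + 2) * (1 / 2) ^ (2 * (j + l + 2)) := by
        rw [← mul_assoc, mul_assoc _ (2 ^ _), ← mul_pow]
        norm_num

theorem sum_choose_mul_half_pow_le (m : ℕ) :
    ∑ k ∈ range (m + 1), (m.choose k : ℝ) * (1 / 2) ^ ((k + 1) * (m + 1 - k)) ≤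
      (1 / 2) ^ m * (1 + 8 * m ^ 2 * (1 / 2) ^ m) := by
  rcases m with _ | m
  · norm_num
  rw [sum_range_succ, sum_range_succ']
  have hmiddle : ∀ k ∈ range m,
      ((m + 1).choose (k + 1) : ℝ) * (1 / 2) ^ ((k + 1 + 1) * (m + 1 + 1 - (k + 1))) ≤
        8 * (m + 1) * (1 / 2) ^ (2 * (m + 1)) := by
    intro k hk
    obtain ⟨l, rfl⟩ : ∃ l, m = k + l + 1 := ⟨m - k - 1, by grind⟩
    rw [show k + l + 1 + 1 + 1 - (k + 1) = l + 2 by omega]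
    convert choose_mul_half_pow_le k l using 3
    push_cast
    ring
  have hsum := sum_le_card_nsmul _ _ _ hmiddle
  simp only [card_range, nsmul_eq_mul] at hsum
  simp only [Nat.choose_zero_right, Nat.choose_self, Nat.cast_one, one_mul, zero_add,
    Nat.add_sub_cancel_left]
  rw [two_mul, pow_add] at hsum
  rw [Nat.sub_zero, mul_one, pow_succ]
  have hx : (0 : ℝ) ≤ (1 / 2) ^ (m + 1) := by positivity
  push_cast at hsum ⊢
  nlinarith [mul_nonneg (mul_nonneg hx hx) m.cast_nonneg]

theorem Pr_not_reaches_le {a s : Fin n} (has : a ≠ s) :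
    Pr n (fun ω => ¬ reaches ω a s) ≤
      (1 / 2) ^ (n - 2) * (1 + 8 * ((n - 2 : ℕ) : ℝ) ^ 2 * (1 / 2) ^ (n - 2)) := by
  classical
  obtain ⟨m, rfl⟩ :=
    Nat.exists_eq_add_of_le' (Fin.nontrivial_iff_two_le.1 (nontrivial_of_ne a s has))
  have hW : #(univ \ {a, s}) = m := by
    rw [card_univ_sdiff, card_pair has, Fintype.card_fin]
    rfl
  calc Pr (m + 2) (fun ω => ¬ reaches ω a s)
      ≤ Pr (m + 2) (fun ω => ∃ T ∈ (univ \ {a, s}).powerset, OutClosed ω (insert a T)) :=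
        Pr_mono fun ω => exists_outClosed_of_not_reaches
    _ ≤ ∑ T ∈ (univ \ {a, s}).powerset, Pr (m + 2) (OutClosed · (insert a T)) :=
        Pr_exists_le_sum _ _
    _ = ∑ T ∈ (univ \ {a, s}).powerset, (1 / 2 : ℝ) ^ ((#T + 1) * (m + 1 - #T)) := by
        refine sum_congr rfl fun T hT => ?_
        have haT : a ∉ T := fun ha => by simpa using mem_powerset.1 hT ha
        rw [Pr_outClosed, card_insert_of_notMem haT]
        congr 2
        omega
    _ = ∑ k ∈ range (m + 1), (m.choose k : ℝ) * (1 / 2) ^ ((k + 1) * (m + 1 - k)) := by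
        rw [sum_powerset_apply_card (fun k => (1 / 2 : ℝ) ^ ((k + 1) * (m + 1 - k))), hW]
        simp only [nsmul_eq_mul]
    _ ≤ _ := by simpa using sum_choose_mul_half_pow_le m

theorem Pr_not_reaches_ge {a s : Fin n} (has : a ≠ s) :
    (1 / 2) ^ (n - 2) * (1 - (1 / 2) ^ (n - 1)) ≤ Pr n (fun ω => ¬ reaches ω a s) := by
  obtain ⟨m, rfl⟩ :=
    Nat.exists_eq_add_of_le' (Fin.nontrivial_iff_two_le.1 (nontrivial_of_ne a s has))
  have hcard : #({s}ᶜ : Finset (Fin (m + 2))) = m + 1 := by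
    rw [card_compl, card_singleton, Fintype.card_fin]
    rfl
  have hsink : Pr (m + 2) (OutClosed · {a}) = (1 / 2) ^ (m + 1) := by
    rw [Pr_outClosed, card_singleton, one_mul]
    rfl
  have hsource : Pr (m + 2) (OutClosed · {s}ᶜ) = (1 / 2) ^ (m + 1) := by
    rw [Pr_outClosed, hcard, show m + 2 - (m + 1) = 1 by omega, mul_one]
  have hboth : Pr (m + 2) (fun ω => OutClosed ω {a} ∧ OutClosed ω {s}ᶜ) ≤
      (1 / 2) ^ (2 * m + 1) := by
    refine (Pr_outClosed_and_outClosed_le _ _).trans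
      (pow_le_pow_of_le_one (by norm_num) (by norm_num) ?_)
    have hunion := card_union_add_card_inter (cut {a}) (cut {s})
    have hinter := card_cut_singleton_inter_le_one has
    simp only [card_cut, card_singleton, one_mul] at hunion
    rw [cut_compl]
    omega
  have heither : Pr (m + 2) (fun ω => OutClosed ω {a} ∨ OutClosed ω {s}ᶜ) ≤
      Pr (m + 2) (fun ω => ¬ reaches ω a s) := by
    refine Pr_mono fun ω h => h.elim (not_reaches_of_outClosed · (mem_singleton_self a) ?_)
      (not_reaches_of_outClosed · ?_ (by simp))
    · simpa using has.symm
    · simpa using has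
  have hincl := Pr_or_add_Pr_and (n := m + 2) (OutClosed · {a}) (OutClosed · {s}ᶜ)
  rw [hsink, hsource] at hincl
  rw [show m + 2 - 2 = m by omega, show m + 2 - 1 = m + 1 by omega]
  rw [show 2 * m + 1 = m + (m + 1) by ring, pow_add] at hboth
  rw [pow_succ] at hincl hboth ⊢
  linarith

theorem no_path_prob_asymp :
    Filter.Tendsto
      (fun n : ℕ => (2 : ℝ) ^ (n - 2) *
        Pr n (fun ω => ∀ a s : Fin n, a.val = 0 → s.val = 1 → ¬ reaches ω a s))
      Filter.atTop (nhds 1) := by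
  rw [← Filter.tendsto_add_atTop_iff_nat 2]
  have hevent (m : ℕ) : (fun ω : Orient (m + 2) =>
      ∀ a s : Fin (m + 2), a.val = 0 → s.val = 1 → ¬ reaches ω a s) =
        (¬ reaches · 0 1) := by
    ext ω
    refine ⟨fun h => h 0 1 rfl rfl, fun h a s ha hs => ?_⟩
    obtain rfl : a = 0 := Fin.ext ha
    obtain rfl : s = 1 := Fin.ext hs
    exact h
  have h01 (m : ℕ) : (0 : Fin (m + 2)) ≠ 1 := by simp
  have hscale (m : ℕ) (x : ℝ) : (2 : ℝ) ^ m * ((1 / 2) ^ m * x) = x := by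
    rw [← mul_assoc, ← mul_pow]
    norm_num
  simp only [hevent, Nat.add_sub_cancel]
  refine tendsto_of_tendsto_of_tendsto_of_le_of_le
    (g := fun m : ℕ => 1 - (1 / 2 : ℝ) ^ (m + 1))
    (h := fun m : ℕ => 1 + 8 * (m : ℝ) ^ 2 * (1 / 2) ^ m) ?_ ?_ (fun m => ?_) (fun m => ?_)
  · simpa using tendsto_const_nhds.sub
      ((tendsto_pow_atTop_nhds_zero_of_lt_one (r := (1 / 2 : ℝ)) (by norm_num) (by norm_num)).comp
        (Filter.tendsto_add_atTop_nat 1))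
  · simpa [mul_assoc] using tendsto_const_nhds.add
      ((tendsto_pow_const_mul_const_pow_of_lt_one 2 (r := (1 / 2 : ℝ)) (by norm_num)
        (by norm_num)).const_mul 8)
  · simpa [hscale] using mul_le_mul_of_nonneg_left (Pr_not_reaches_ge (h01 m))
      (by positivity : (0 : ℝ) ≤ 2 ^ m)
  · simpa [hscale] using mul_le_mul_of_nonneg_left (Pr_not_reaches_le (h01 m))
      (by positivity : (0 : ℝ) ≤ 2 ^ m)
end

section
/- Let f(n,k) be the probability that in a uniformly random tournament on n vertices, none of the vertices of a fixed k-element set K (with s ∉ K) has a directed path to a fixed vertex s, with f(n,0) = 1 and f(1,0) = 1. Then for all n ≥ k+1 ≥ 2: f(n,k) = Σ_{i=0}^{n-k-1} C(n-k-1, i) · (2^k − 1)^i / 2^(k(n-k)) · f(n-k, i). -/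
/-- `f n k` is the probability that in a uniformly random tournament on `n` vertices no
vertex of the `k`-element set `{0, …, k-1}` has a directed path to the vertex `k`. -/
noncomputable def f (n k : ℕ) : ℝ :=
  Pr n (fun ω => ∀ a s : Fin n, a.val < k → s.val = k → ¬ reaches ω a s)

open Finset Relation Function

theorem Relation.exists_transGen_into_range_iff {α β : Type*} {r : α → α → Prop} {e : β → α}
    (z : β) :
    (∃ a ∉ Set.range e, TransGen r a (e z)) ↔
      ∃ v, (∃ a ∉ Set.range e, r a (e v)) ∧ ReflTransGen (r on e) v z := by
  constructor
  · rintro ⟨a, ha, hpath⟩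
    have key : ∀ x, TransGen r x (e z) →
        (∃ v, (∃ a ∉ Set.range e, r a (e v)) ∧ ReflTransGen (r on e) v z) ∨
          ∃ u, e u = x ∧ ReflTransGen (r on e) u z := by
      intro x hx
      induction hx using TransGen.head_induction_on with
      | @single x hxz =>
        by_cases hx : x ∈ Set.range e
        · obtain ⟨u, rfl⟩ := hx
          exact .inr ⟨u, rfl, .single hxz⟩
        · exact .inl ⟨z, ⟨x, hx, hxz⟩, .refl⟩
      | @head x b hxb _ ih =>
        rcases ih with hentry | ⟨u, rfl, hu⟩
        · exact .inl hentry
        by_cases hx : x ∈ Set.range e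
        · obtain ⟨w, rfl⟩ := hx
          exact .inr ⟨w, rfl, .head hxb hu⟩
        · exact .inl ⟨u, ⟨x, hx, hxb⟩, hu⟩
    rcases key a hpath with hentry | ⟨u, rfl, -⟩
    · exact hentry
    · exact absurd ⟨u, rfl⟩ ha
  · rintro ⟨v, ⟨a, ha, hav⟩, hvz⟩
    exact ⟨a, ha, .head' hav (ReflTransGen.lift (p := r) e (fun _ _ h => h) _ _ hvz)⟩

lemma Equiv.Perm.exists_apply_eq_and_mapsTo {α : Type*} [DecidableEq α] [Fintype α]
    {A B : Finset α} (h : #A = #B) {t u : α} (ht : t ∉ A) (hu : u ∉ B) :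
    ∃ σ : Equiv.Perm α, σ t = u ∧ ∀ a ∈ A, σ a ∈ B := by
  set σ := (Finset.equivOfCardEq h).extendSubtype
  have hσA : ∀ a ∈ A, σ a ∈ B := fun a ha => Equiv.extendSubtype_mem _ a ha
  have hσt : σ t ∉ B := Equiv.extendSubtype_not_mem _ t ht
  -- the swap fixes `B` pointwise, as both `σ t` and `u` lie outside `B`
  refine ⟨Equiv.swap (σ t) u * σ, by simp, fun a ha => ?_⟩
  rw [Equiv.Perm.mul_apply, Equiv.swap_apply_of_ne_of_ne (ne_of_mem_of_not_mem (hσA a ha) hσt)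
    (ne_of_mem_of_not_mem (hσA a ha) hu)]
  exact hσA a ha

lemma Finset.card_filter_fun_eq {ι κ : Type*} [Fintype ι] [DecidableEq ι] [Fintype κ]
    [DecidableEq κ] (p : κ → Prop) [DecidablePred p] (L : Finset ι) :
    #{c : ι → κ | ({v | p (c v)} : Finset ι) = L} = #{x | p x} ^ #L * #{x | ¬ p x} ^ #Lᶜ := by
  have hfiber : ({c : ι → κ | ({v | p (c v)} : Finset ι) = L} : Finset (ι → κ)) =
      Fintype.piFinset fun v =>
        if v ∈ L then ({x | p x} : Finset κ) else ({x | ¬ p x} : Finset κ) := by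
    ext c
    simp only [mem_filter, mem_univ, true_and, Fintype.mem_piFinset, Finset.ext_iff]
    refine forall_congr' fun v => ?_
    split_ifs with hv <;> simp [hv]
  rw [hfiber, Fintype.card_piFinset, prod_apply_ite, prod_const, prod_const]
  congr 3 <;> ext <;> simp

lemma Finset.sum_fun_eq_sum_powerset {ι κ M : Type*} [Fintype ι] [DecidableEq ι] [Fintype κ]
    [DecidableEq κ] [AddCommMonoid M] (p : κ → Prop) [DecidablePred p] (g : Finset ι → M) :
    ∑ c : ι → κ, g {v | p (c v)} =
      ∑ L ∈ univ.powerset, (#{x | p x} ^ #L * #{x | ¬ p x} ^ #Lᶜ) • g L := by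
  rw [← sum_fiberwise_of_maps_to (g := fun c : ι → κ => ({v | p (c v)} : Finset ι))
    (t := univ.powerset) (fun _ _ => mem_powerset.2 (subset_univ _))]
  refine sum_congr rfl fun L _ => ?_
  rw [sum_congr rfl fun c hc => congrArg g (mem_filter.1 hc).2, sum_const, card_filter_fun_eq]

lemma card_filter_not_exists_eq_true (k : ℕ) : #{w : Fin k → Bool | ¬ ∃ a, w a = true} = 1 :=
  card_eq_one.2 ⟨fun _ => false, by ext w; simp [funext_iff]⟩

lemma card_filter_exists_eq_true (k : ℕ) : #{w : Fin k → Bool | ∃ a, w a = true} = 2 ^ k - 1 := by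
  have := card_filter_add_card_filter_not (s := univ) fun w : Fin k → Bool => ∃ a, w a = true
  rw [card_filter_not_exists_eq_true, card_univ, Fintype.card_fun, Fintype.card_bool,
    Fintype.card_fin] at this
  omega

namespace Orient

variable {n : ℕ}

instance (ω : Orient n) (i j : Fin n) : Decidable (dir ω i j) :=
  inferInstanceAs (Decidable (_ ∨ _))

lemma dir_iff_of_lt (ω : Orient n) {i j : Fin n} (h : i < j) :
    dir ω i j ↔ ω ⟨(i, j), h⟩ = true := by
  simp [dir, h, h.not_gt]

lemma dir_iff_of_gt (ω : Orient n) {i j : Fin n} (h : j < i) :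
    dir ω i j ↔ ω ⟨(j, i), h⟩ = false := by
  simp [dir, h, h.not_gt]

lemma not_dir_self (ω : Orient n) (i : Fin n) : ¬ dir ω i i := by
  simp [dir]

lemma dir_swap_iff (ω : Orient n) {i j : Fin n} (h : i ≠ j) : dir ω j i ↔ ¬ dir ω i j := by
  rcases h.lt_or_gt with h | h
  · simp [dir_iff_of_lt ω h, dir_iff_of_gt ω h]
  · simp [dir_iff_of_lt ω h, dir_iff_of_gt ω h]

lemma ext_dir {ω ω' : Orient n} (h : ∀ i j, dir ω i j ↔ dir ω' i j) : ω = ω' := by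
  funext p
  simpa [dir_iff_of_lt _ p.2] using h p.1.1 p.1.2

def pullback {m : ℕ} (e : Fin m ↪ Fin n) (ω : Orient n) : Orient m :=
  fun p => decide (dir ω (e p.1.1) (e p.1.2))

lemma dir_pullback {m : ℕ} (e : Fin m ↪ Fin n) (ω : Orient n) (i j : Fin m) :
    dir (ω.pullback e) i j ↔ dir ω (e i) (e j) := by
  rcases lt_trichotomy i j with h | rfl | h
  · simp [dir_iff_of_lt _ h, pullback]
  · simp [not_dir_self]
  · simp [dir_iff_of_gt _ h, pullback, dir_swap_iff ω (e.injective.ne h.ne')]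

lemma reaches_pullback {m : ℕ} (e : Fin m ↪ Fin n) (ω : Orient n) {i j : Fin m}
    (h : reaches (ω.pullback e) i j) : reaches ω (e i) (e j) :=
  TransGen.lift e (fun a b => (dir_pullback e ω a b).1) _ _ h

lemma pullback_injective (σ : Equiv.Perm (Fin n)) :
    Injective (pullback σ.toEmbedding) := by
  intro ω ω' h
  refine ext_dir fun i j => ?_
  simpa [dir_pullback] using Iff.of_eq (congrArg (dir · (σ.symm i) (σ.symm j)) h)

open Classical in
lemma card_forall_not_reaches_le {A B : Finset (Fin n)} (h : #A = #B) {t u : Fin n}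
    (ht : t ∉ A) (hu : u ∉ B) :
    #{ω : Orient n | ∀ b ∈ B, ¬ reaches ω b u} ≤ #{ω : Orient n | ∀ a ∈ A, ¬ reaches ω a t} := by
  obtain ⟨σ, hσt, hσA⟩ := Equiv.Perm.exists_apply_eq_and_mapsTo h ht hu
  refine card_le_card_of_injOn (pullback σ.toEmbedding) (fun ω hω => ?_)
    (pullback_injective σ).injOn
  simp only [coe_filter, mem_univ, true_and, Set.mem_ofPred_eq] at hω ⊢
  intro a ha hreach
  exact hω _ (hσA a ha) (by simpa [hσt] using reaches_pullback _ _ hreach)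

open Classical in
lemma card_forall_not_reaches_congr {A B : Finset (Fin n)} (h : #A = #B) {t u : Fin n}
    (ht : t ∉ A) (hu : u ∉ B) :
    #{ω : Orient n | ∀ a ∈ A, ¬ reaches ω a t} = #{ω : Orient n | ∀ b ∈ B, ¬ reaches ω b u} :=
  (card_forall_not_reaches_le h.symm hu ht).antisymm (card_forall_not_reaches_le h ht hu)

open Classical in
lemma f_eq_card_forall_not_reaches_div {A : Finset (Fin n)} {t : Fin n} (ht : t ∉ A) :
    f n #A = #{ω : Orient n | ∀ a ∈ A, ¬ reaches ω a t} / Fintype.card (Orient n) := by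
  have hA : #A < n := by simpa using card_lt_univ_of_notMem ht
  set s : Fin n := ⟨#A, hA⟩
  rw [← card_forall_not_reaches_congr (by simp [s] : #(Iio s) = #A) (by simp : s ∉ Iio s) ht]
  simp only [f, Pr]
  congr 3
  ext ω
  simp only [mem_filter, mem_univ, true_and, mem_Iio]
  constructor
  · exact fun h a ha => h a s ha rfl
  · intro h a s' ha hs'
    obtain rfl : s' = s := Fin.ext hs'
    exact h a ha

abbrev Edge (n : ℕ) : Type := {p : Fin n × Fin n // p.1 < p.2}

def Edge.map {m : ℕ} (e : Fin m ↪o Fin n) (p : Edge m) : Edge n :=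
  ⟨(e p.1.1, e p.1.2), e.lt_iff_lt.2 p.2⟩

lemma comp_edgeMap_eq_pullback {m : ℕ} (e : Fin m ↪o Fin n) (ω : Orient n) :
    ω ∘ Edge.map e = ω.pullback e.toEmbedding := by
  funext p
  simp [Edge.map, pullback, dir_iff_of_lt ω (e.lt_iff_lt.2 p.2)]

/-- The edge `(v, a)` of the middle summand joins `a : Fin k` to the `v`-th of the last `m`
vertices. -/
def splitEdge (k m : ℕ) : Edge k ⊕ (Fin m × Fin k) ⊕ Edge m → Edge (k + m)
  | .inl p => p.map (Fin.castAddOrderEmb m)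
  | .inr (.inl (v, a)) => ⟨(Fin.castAdd m a, Fin.natAdd k v), by simp [Fin.lt_def]; omega⟩
  | .inr (.inr p) => p.map (Fin.natAddOrderEmb k)

lemma splitEdge_bijective (k m : ℕ) : Bijective (splitEdge k m) := by
  constructor
  · rintro (p | ⟨v, a⟩ | p) (q | ⟨w, b⟩ | q) h <;>
      simp [splitEdge, Edge.map, Subtype.ext_iff, Prod.ext_iff, Fin.ext_iff] at h ⊢ <;> omega
  · rintro ⟨⟨i, j⟩, hij⟩
    induction i using Fin.addCases with
    | left a =>
      induction j using Fin.addCases with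
      | left b => exact ⟨.inl ⟨(a, b), (Fin.strictMono_castAdd m).lt_iff_lt.1 hij⟩, rfl⟩
      | right v => exact ⟨.inr (.inl (v, a)), rfl⟩
    | right u =>
      induction j using Fin.addCases with
      | left b => simp [Fin.lt_def] at hij; omega
      | right v => exact ⟨.inr (.inr ⟨(u, v), (Fin.strictMono_natAdd k).lt_iff_lt.1 hij⟩), rfl⟩

noncomputable def decompose (k m : ℕ) :
    Orient (k + m) ≃ Orient k × (Fin m → Fin k → Bool) × Orient m :=
  ((Equiv.ofBijective _ (splitEdge_bijective k m)).arrowCongr (Equiv.refl Bool)).symm.trans <|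
    (Equiv.sumArrowEquivProdArrow _ _ _).trans <| (Equiv.refl _).prodCongr <|
      (Equiv.sumArrowEquivProdArrow _ _ _).trans <| (Equiv.curry _ _ _).prodCongr (Equiv.refl _)

lemma decompose_cross {k m : ℕ} (ω : Orient (k + m)) (v : Fin m) (a : Fin k) :
    (decompose k m ω).2.1 v a = true ↔ dir ω (Fin.castAdd m a) (Fin.natAdd k v) :=
  (dir_iff_of_lt ω _).symm

lemma decompose_inner {k m : ℕ} (ω : Orient (k + m)) :
    (decompose k m ω).2.2 = ω.pullback (Fin.natAddEmb k) :=
  comp_edgeMap_eq_pullback (Fin.natAddOrderEmb k) ω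

lemma card_add (k m : ℕ) :
    Fintype.card (Orient (k + m)) =
      Fintype.card (Orient k) * 2 ^ (k * m) * Fintype.card (Orient m) := by
  simp [Fintype.card_congr (decompose k m), ← pow_mul, mul_comm k, mul_assoc]

lemma card_filter_decompose {k m : ℕ} (Q : (Fin m → Fin k → Bool) → Orient m → Prop)
    [∀ c, DecidablePred (Q c)] :
    #{ω : Orient (k + m) | Q (decompose k m ω).2.1 (decompose k m ω).2.2} =
      Fintype.card (Orient k) * ∑ c, #{r : Orient m | Q c r} := by
  simp only [card_filter]
  rw [Fintype.sum_equiv (decompose k m) _ (fun y => if Q y.2.1 y.2.2 then 1 else 0) fun _ => rfl,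
    Fintype.sum_prod_type, sum_const_nat (m := ∑ c, ∑ r, if Q c r then 1 else 0) fun _ _ => ?_,
    card_univ]
  simp only [Fintype.sum_prod_type]

lemma forall_not_reaches_iff_decompose {k m : ℕ} (ω : Orient (k + m)) (z : Fin m) :
    (∀ a : Fin (k + m), a.val < k → ¬ reaches ω a (Fin.natAdd k z)) ↔
      ¬ ∃ v, (∃ a, (decompose k m ω).2.1 v a = true) ∧
        ReflTransGen (dir (decompose k m ω).2.2) v z := by
  have hcompl (a : Fin (k + m)) : a ∉ Set.range (Fin.natAdd k) ↔ a.val < k := by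
    simp [Fin.range_natAdd]
  have hentry (v : Fin m) : (∃ a, (decompose k m ω).2.1 v a = true) ↔
      ∃ a ∉ Set.range (Fin.natAdd k), dir ω a (Fin.natAdd k v) := by
    simp only [decompose_cross, hcompl]
    exact ⟨fun ⟨a, h⟩ => ⟨_, a.is_lt, h⟩, fun ⟨a, ha, h⟩ => ⟨⟨a, ha⟩, h⟩⟩
  have hinner : dir (decompose k m ω).2.2 = (dir ω on Fin.natAdd k) := by
    ext u v
    rw [decompose_inner]
    exact dir_pullback _ ω u v
  simp only [hentry, hinner]
  rw [← exists_transGen_into_range_iff]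
  simp only [hcompl, reaches, not_exists, not_and]

open Classical in
lemma card_forall_not_reaches_eq_sum {k m : ℕ} (z : Fin m) :
    #{ω : Orient (k + m) | ∀ a : Fin (k + m), a.val < k → ¬ reaches ω a (Fin.natAdd k z)} =
      Fintype.card (Orient k) * ∑ L ∈ univ.powerset,
        (2 ^ k - 1) ^ #L * #{r : Orient m | ¬ ∃ v ∈ L, ReflTransGen (dir r) v z} := by
  rw [filter_congr fun ω _ => forall_not_reaches_iff_decompose ω z]
  refine (card_filter_decompose (k := k) fun c r =>
    ¬ ∃ v, (∃ a, c v a = true) ∧ ReflTransGen (dir r) v z).trans ?_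
  have hentry (c : Fin m → Fin k → Bool) :
      #{r : Orient m | ¬ ∃ v, (∃ a, c v a = true) ∧ ReflTransGen (dir r) v z} =
        #{r : Orient m | ¬ ∃ v ∈ ({v | ∃ a, c v a = true} : Finset (Fin m)),
          ReflTransGen (dir r) v z} := by
    simp only [mem_filter, mem_univ, true_and]
  simp only [hentry, sum_fun_eq_sum_powerset (fun w : Fin k → Bool => ∃ a, w a = true)
    fun L => #{r : Orient m | ¬ ∃ v ∈ L, ReflTransGen (dir r) v z},
    card_filter_exists_eq_true, card_filter_not_exists_eq_true, one_pow, mul_one, smul_eq_mul]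

open Classical in
lemma sum_powerset_card_not_reflTransGen {m : ℕ} (z : Fin m) (x : ℝ) :
    ∑ L ∈ univ.powerset, x ^ #L * (#{r : Orient m | ¬ ∃ v ∈ L, ReflTransGen (dir r) v z} : ℝ) =
      Fintype.card (Orient m) * ∑ L ∈ (univ.erase z).powerset, x ^ #L * f m #L := by
  have hz (L : Finset (Fin m)) :
      #{r : Orient m | ¬ ∃ v ∈ insert z L, ReflTransGen (dir r) v z} = 0 := by
    simp only [card_eq_zero, filter_eq_empty_iff]
    exact fun r _ h => h ⟨z, mem_insert_self z L, .refl⟩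
  conv_lhs => rw [← insert_erase (mem_univ z), sum_powerset_insert (notMem_erase z univ)]
  simp only [hz, CharP.cast_eq_zero, mul_zero, sum_const_zero, add_zero, mul_sum]
  refine sum_congr rfl fun L hL => ?_
  have hzL : z ∉ L := fun h => notMem_erase z univ (mem_powerset.1 hL h)
  have hcount : #{r : Orient m | ¬ ∃ v ∈ L, ReflTransGen (dir r) v z} =
      #{r : Orient m | ∀ v ∈ L, ¬ reaches r v z} := by
    refine congrArg card (filter_congr fun r _ => ?_)
    simp only [reflTransGen_iff_eq_or_transGen, reaches, not_exists, not_and, not_or]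
    exact forall₂_congr fun v hv => and_iff_right (ne_of_mem_of_not_mem hv hzL).symm
  rw [f_eq_card_forall_not_reaches_div hzL, hcount]
  field_simp

open Classical in
lemma f_add_eq_card_div {k m : ℕ} (hm : 0 < m) :
    f (k + m) k = #{ω : Orient (k + m) | ∀ a : Fin (k + m), a.val < k →
      ¬ reaches ω a (Fin.natAdd k ⟨0, hm⟩)} / Fintype.card (Orient (k + m)) := by
  simp only [f, Pr]
  congr 3
  ext ω
  simp only [mem_filter, mem_univ, true_and]
  refine forall_congr' fun a => ⟨fun h ha => h _ ha (by simp), fun h s ha hs => ?_⟩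
  obtain rfl : s = Fin.natAdd k ⟨0, hm⟩ := Fin.ext (by simp [hs])
  exact h ha

end Orient

theorem f_recursion_general (n k : ℕ) (hn : k + 1 ≤ n) :
    f n k = ∑ i ∈ Finset.range (n - k),
      ((n - k - 1).choose i : ℝ) * ((2 : ℝ) ^ k - 1) ^ i / 2 ^ (k * (n - k)) * f (n - k) i := by
  obtain ⟨m, rfl⟩ : ∃ m, n = k + m := ⟨n - k, by omega⟩
  have hm : 0 < m := by omega
  have h2k : ((2 ^ k - 1 : ℕ) : ℝ) = 2 ^ k - 1 := by
    rw [Nat.cast_sub Nat.one_le_two_pow]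
    norm_num
  rw [Orient.f_add_eq_card_div hm, Orient.card_forall_not_reaches_eq_sum]
  push_cast [h2k]
  rw [Orient.sum_powerset_card_not_reflTransGen,
    sum_powerset_apply_card fun i => ((2 : ℝ) ^ k - 1) ^ i * f m i,
    card_erase_of_mem (mem_univ _), card_univ, Fintype.card_fin, Orient.card_add,
    Nat.add_sub_cancel_left, Nat.sub_add_cancel hm]
  simp only [nsmul_eq_mul, mul_sum, sum_div]
  refine sum_congr rfl fun i _ => ?_
  field_simp
  push_cast
  ring

theorem f_recursion (n k : ℕ) (hk : 1 ≤ k) (hn : k + 1 ≤ n) :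
    f n k = ∑ i ∈ Finset.range (n - k),
      ((n - k - 1).choose i : ℝ) * ((2 : ℝ) ^ k - 1) ^ i / 2 ^ (k * (n - k)) * f (n - k) i :=
  f_recursion_general n k hn
end
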